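/- Let E be a topological graph, n ≥ 1, and let x₁, …, xₙ ∈ C_c(E¹) each have supp an s-section; write x = x₁◇⋯◇xₙ ∈ C_c(Eⁿ). Fix f ∈ C₀(E⁰). Then there exists f̃ ∈ C_c(E⁰) such that f̃(s(μ)) = f(r(μ)) whenever x(μ) ≠ 0. For any such f̃ one has f·x = x·f̃ in C_c(Eⁿ), and π(f) ψ(x₁) ⋯ ψ(xₙ) = ψ(x₁) ⋯ ψ(xₙ) π(f̃) for every Toeplitz representation (ψ, π) of E. -/

import Mathlib

open scoped ZeroAtInfty CompactlySupported ComplexOrder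

noncomputable section

namespace TopGraphPaper

variable {V G : Type*} [TopologicalSpace V] [TopologicalSpace G]

/-- The set `E⁰_fin` of vertices having a neighbourhood `N` with `r⁻¹(N)` compact. -/
def Efin (r : G → V) : Set V := {v | ∃ N ∈ nhds v, IsCompact (r ⁻¹' N)}

/-- The set `E⁰_sce = E⁰ \ closure (r(E¹))`. -/
def Esce (r : G → V) : Set V := (closure (Set.range r))ᶜ

/-- The set `E⁰_rg = E⁰_fin \ closure (E⁰_sce)`. -/
def Erg (r : G → V) : Set V := Efin r \ closure (Esce r)

/-- `U ⊆ E¹` is an `s`-section if `s` restricted to `U` is a homeomorphism onto its image. -/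
def IsSSection (s : G → V) (U : Set G) : Prop := Topology.IsEmbedding (U.restrict s)

/-- A complex-valued function is nonnegative if all its values are nonnegative reals. -/
def NonnegFn {α : Type*} (x : α → ℂ) : Prop := ∀ a, 0 ≤ x a

/-- The norm `‖x‖_{C₀(E⁰)} = sup_v √(Σ_{s e = v} |x e|²)` on `C_c(E¹)`. -/
def gnorm (s : G → V) (x : G → ℂ) : ℝ :=
  ⨆ v : V, Real.sqrt (∑' e : (s ⁻¹' {v} : Set G), ‖x (e : G)‖ ^ 2)

variable {B : Type*} [NonUnitalCStarAlgebra B]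

/-- A Toeplitz representation of the topological graph `(V, G, r, s)` in the C*-algebra `B`. -/
structure IsToeplitzRep (r s : G → V) (ψ : C_c(G, ℂ) →ₗ[ℂ] B)
    (π : C₀(V, ℂ) →⋆ₙₐ[ℂ] B) : Prop where
  act : ∀ (f : C₀(V, ℂ)) (x y : C_c(G, ℂ)), (∀ e, y e = f (r e) * x e) → ψ y = π f * ψ x
  inner : ∀ (x : C_c(G, ℂ)) (U : Set G), IsOpen U → IsSSection s U → tsupport ⇑x ⊆ U →
    ∀ g : C₀(V, ℂ), (∀ e, x e ≠ 0 → g (s e) = (‖x e‖ : ℂ) ^ 2) →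
      (∀ v, v ∉ s '' Function.support ⇑x → g v = 0) → π g = star (ψ x) * ψ x
  orth : ∀ (x y : C_c(G, ℂ)) (Ux Uy : Set G), IsOpen Ux → IsOpen Uy →
    IsSSection s Ux → IsSSection s Uy → Disjoint Ux Uy →
    tsupport ⇑x ⊆ Ux → tsupport ⇑y ⊆ Uy → star (ψ x) * ψ y = 0

/-- Covariance of a Toeplitz representation.  Here, for each `f` in the generating family `𝒢`,
the function `gN N` plays the role of `√(f_N)`, so that `f_N = (gN N)^2`. -/
def IsCovariant (r s : G → V) (ψ : C_c(G, ℂ) →ₗ[ℂ] B) (π : C₀(V, ℂ) →⋆ₙₐ[ℂ] B) : Prop :=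
  ∃ 𝒢 : Set C₀(V, ℂ),
    (∀ f ∈ 𝒢, HasCompactSupport ⇑f ∧ NonnegFn ⇑f ∧ tsupport ⇑f ⊆ Erg r) ∧
    closure ((NonUnitalStarAlgebra.adjoin ℂ 𝒢 : NonUnitalStarSubalgebra ℂ C₀(V, ℂ)) :
        Set C₀(V, ℂ)) = {f : C₀(V, ℂ) | ∀ v ∉ Erg r, f v = 0} ∧
    ∀ f ∈ 𝒢, ∃ (𝒩 : Finset (Set G)) (gN : Set G → C_c(G, ℂ)),
      (∀ N ∈ 𝒩, IsOpen N ∧ IsSSection s N) ∧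
      r ⁻¹' tsupport ⇑f ⊆ ⋃ N ∈ 𝒩, N ∧
      (∀ N ∈ 𝒩, NonnegFn ⇑(gN N) ∧
        Function.support ⇑(gN N) ⊆ N ∩ r ⁻¹' tsupport ⇑f) ∧
      (∀ e, ∑ N ∈ 𝒩, (gN N e) ^ 2 = f (r e)) ∧
      π f = ∑ N ∈ 𝒩, ψ (gN N) * star (ψ (gN N))

/-- A local `r`-fibration `(𝒰, W)`. -/
structure IsLocalRFib (r s : G → V) (𝒰 : Finset (Set G)) (W : Set V) : Prop where
  disj : (𝒰 : Set (Set G)).Pairwise Disjoint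
  sSec : ∀ U ∈ 𝒰, IsSSection s U
  rSec : ∀ U ∈ 𝒰, IsSSection r U
  pre : r ⁻¹' W = ⋃ U ∈ 𝒰, U
  ran : ∀ U ∈ 𝒰, r '' U = W

/-- An open local `r`-fibration. -/
def IsOpenLocalRFib (r s : G → V) (𝒰 : Finset (Set G)) (W : Set V) : Prop :=
  IsLocalRFib r s 𝒰 W ∧ IsOpen W ∧ ∀ U ∈ 𝒰, IsOpen U

/-- A precompact local `r`-fibration. -/
def IsPrecompactLocalRFib (r s : G → V) (𝒰 : Finset (Set G)) (W : Set V) : Prop :=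
  IsLocalRFib r s 𝒰 W ∧ IsCompact (closure W) ∧ ∀ U ∈ 𝒰, IsCompact (closure U)


variable {V G : Type*} [TopologicalSpace V] [TopologicalSpace G]

/-- The space `Eⁿ` of paths of length `n`, as a subset of `(E¹)ⁿ`. -/
def PathSet (r s : G → V) (n : ℕ) : Set (Fin n → G) :=
  {μ | ∀ (i : ℕ) (h : i + 1 < n), s (μ ⟨i, by omega⟩) = r (μ ⟨i + 1, h⟩)}

/-- The function `x₁ ◇ ⋯ ◇ xₙ` on `(E¹)ⁿ`. -/
def diam {n : ℕ} (x : Fin n → C_c(G, ℂ)) (μ : Fin n → G) : ℂ := ∏ i, x i (μ i)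

/-- `lprod a [b₁,…,bₖ] = a * b₁ * ⋯ * bₖ` (products in a possibly non-unital ring). -/
def lprod {M : Type*} [Mul M] : M → List M → M
  | a, [] => a
  | a, b :: l => lprod (a * b) l

/-- The product `F 0 * F 1 * ⋯ * F (n-1)` for `n ≥ 1`. -/
def finProd {M : Type*} [Mul M] {n : ℕ} (hn : 0 < n) (F : Fin n → M) : M :=
  lprod (F ⟨0, hn⟩) (List.ofFn fun i : Fin (n - 1) => F ⟨(i : ℕ) + 1, by omega⟩)

/-- The infinite path space `E^∞`. -/
def InfPath (r s : G → V) : Type _ := {z : ℕ → G // ∀ i, s (z i) = r (z (i + 1))}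

instance (r s : G → V) : TopologicalSpace (InfPath r s) :=
  inferInstanceAs (TopologicalSpace {z : ℕ → G // ∀ i, s (z i) = r (z (i + 1))})

/-- The shift map `σ : E^∞ → E^∞`. -/
def shift (r s : G → V) : InfPath r s → InfPath r s :=
  fun z => ⟨fun i => z.1 (i + 1), fun i => z.2 (i + 1)⟩

/-- A list of edges is a (finite) path when consecutive edges compose. -/
def IsPathL (r s : G → V) (μ : List G) : Prop := μ.Chain' fun e f => s e = r f

/-- The cylinder set `Z(μ)` of a finite path `μ` of positive length. -/
def cylP (r s : G → V) (μ : List G) : Set (InfPath r s) :=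
  {z | ∀ (i : ℕ) (h : i < μ.length), z.1 i = μ.get ⟨i, h⟩}

/-- The cylinder set `Z(v)` of a vertex `v`. -/
def cylV (r s : G → V) (v : V) : Set (InfPath r s) := {z | r (z.1 0) = v}

/-- `t_μ`, with the convention `t_v = q_v` for paths `μ` of length zero based at `v`. -/
def tPath {M : Type*} [Mul M] (Q : V → M) (T : G → M) (v : V) : List G → M
  | [] => Q v
  | e :: l => lprod (T e) (l.map T)

variable {B : Type*} [NonUnitalCStarAlgebra B]

/-- A Cuntz–Krieger `E`-family in `B`. -/
structure IsCKFamily (r s : G → V) (Q : V → B) (T : G → B) : Prop where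
  proj : ∀ v, star (Q v) = Q v ∧ Q v * Q v = Q v
  orth : ∀ v w, v ≠ w → Q v * Q w = 0
  srce : ∀ e, star (T e) * T e = Q (s e)
  ck : ∀ (v : V) (F : Finset G), (∀ e, e ∈ F ↔ r e = v) → Q v = ∑ e ∈ F, T e * star (T e)



/-! ### Auxiliary machinery for Statement 15 -/

section Statement15Aux

variable {V G : Type*} [TopologicalSpace V] [TopologicalSpace G]

lemma isSSection_of_open [T2Space V] {s : G → V} (hs : IsLocalHomeomorph s)
    {U : Set G} (hU : IsOpen U) (hinj : Set.InjOn s U) : IsSSection s U := by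
  have hom : IsOpenMap (U.restrict s) := (hs.isOpenMap).restrict hU
  have hcont : Continuous (U.restrict s) := hs.continuous.comp continuous_subtype_val
  have hi : Function.Injective (U.restrict s) := fun a b hab =>
    Subtype.ext (hinj a.2 b.2 hab)
  exact (Topology.IsOpenEmbedding.of_continuous_injective_isOpenMap hcont hi hom).isEmbedding

/-- Extend a compact `s`-section to an open one. -/
lemma exists_open_ssection [T2Space V] {s : G → V} (hs : IsLocalHomeomorph s)
    {K : Set G} (hK : IsCompact K) (hsec : IsSSection s K) :
    ∃ U : Set G, IsOpen U ∧ K ⊆ U ∧ IsSSection s U := by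
  set D : Set (G × G) := {p | s p.1 = s p.2 ∧ p.1 ≠ p.2} with hD
  have hDc : IsOpen Dᶜ := by
    rw [isOpen_iff_mem_nhds]
    rintro ⟨a, b⟩ hab
    by_cases hsab : s a = s b
    · have hab' : a = b := by
        by_contra h
        exact hab ⟨hsab, h⟩
      subst hab'
      obtain ⟨e, hae, he⟩ := hs a
      have : e.source ×ˢ e.source ∈ nhds (a, a) :=
        prod_mem_nhds (e.open_source.mem_nhds hae) (e.open_source.mem_nhds hae)
      refine Filter.mem_of_superset this ?_
      rintro ⟨c, d⟩ ⟨hc, hd⟩ ⟨hscd, hne⟩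
      exact hne (e.injOn hc hd (by rw [← he]; exact hscd))
    · obtain ⟨Oa, Ob, hOa, hOb, haO, hbO, hdisj⟩ := t2_separation hsab
      have : (s ⁻¹' Oa) ×ˢ (s ⁻¹' Ob) ∈ nhds (a, b) :=
        prod_mem_nhds ((hOa.preimage hs.continuous).mem_nhds haO)
          ((hOb.preimage hs.continuous).mem_nhds hbO)
      refine Filter.mem_of_superset this ?_
      rintro ⟨c, d⟩ ⟨hc, hd⟩ ⟨hscd, _⟩
      exact Set.disjoint_left.mp hdisj hc (hscd ▸ hd)
  have hinjK : Set.InjOn s K := by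
    intro a ha b hb hab
    have : (⟨a, ha⟩ : K) = ⟨b, hb⟩ := hsec.injective (by simpa [Set.restrict] using hab)
    exact congrArg Subtype.val this
  have hKK : K ×ˢ K ⊆ Dᶜ := by
    rintro ⟨a, b⟩ ⟨ha, hb⟩ ⟨hsab, hne⟩
    exact hne (hinjK ha hb hsab)
  obtain ⟨u, v, hu, hv, hKu, hKv, huv⟩ := generalized_tube_lemma hK hK hDc hKK
  refine ⟨u ∩ v, hu.inter hv, Set.subset_inter hKu hKv, ?_⟩
  refine isSSection_of_open hs (hu.inter hv) ?_
  intro a ha b hb hab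
  by_contra hne
  exact huv (Set.mk_mem_prod ha.1 hb.2) ⟨hab, hne⟩

/-- Tietze step: produce a compactly supported `h ∈ C₀(E⁰)` with `h (s e) = f (r e)`
on a compact `s`-section `K`. -/
lemma tietze_step [LocallyCompactSpace V] [T2Space V]
    {r s : G → V} (hr : Continuous r) (hs : Continuous s)
    {K : Set G} (hK : IsCompact K) (hsec : IsSSection s K) (f : C₀(V, ℂ)) :
    ∃ h : C₀(V, ℂ), HasCompactSupport ⇑h ∧ ∀ e ∈ K, h (s e) = f (r e) := by
  classical
  set R : Set V := s '' K with hR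
  have hRc : IsCompact R := hK.image hs
  have hRR : Set.range (K.restrict s) = R := Set.range_restrict s K
  set σ : K ≃ₜ Set.range (K.restrict s) := hsec.toHomeomorph with hσ
  have hcast : Continuous fun v : R =>
      (⟨v.1, by rw [hRR]; exact v.2⟩ : Set.range (K.restrict s)) :=
    Continuous.subtype_mk continuous_subtype_val _
  set f₁ : C(R, ℂ) :=
    ⟨fun v => f (r ((σ.symm ⟨v.1, by rw [hRR]; exact v.2⟩ : K) : G)),
      (map_continuous f).comp (hr.comp (continuous_subtype_val.comp
        (σ.symm.continuous.comp hcast)))⟩ with hf₁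
  haveI : CompactSpace R := isCompact_iff_compactSpace.mp hRc
  set e : R → OnePoint V := fun v => OnePoint.some v.1 with he
  have hecont : Continuous e := OnePoint.continuous_coe.comp continuous_subtype_val
  have hecl : Topology.IsClosedEmbedding e :=
    Continuous.isClosedEmbedding hecont
      (OnePoint.coe_injective.comp Subtype.val_injective)
  obtain ⟨g, hg⟩ := ContinuousMap.exists_extension' hecl f₁
  set h₀ : C(V, ℂ) := g.comp ⟨OnePoint.some, OnePoint.continuous_coe⟩ with hh₀
  obtain ⟨χ, hχ1, -, hχc, -⟩ :=
    exists_continuous_one_zero_of_isCompact hRc isClosed_empty (Set.disjoint_empty R)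
  set h : V → ℂ := fun v => h₀ v * (χ v : ℂ) with hh
  have hcont : Continuous h := h₀.continuous.mul (Complex.continuous_ofReal.comp χ.continuous)
  have hsupp : HasCompactSupport h := by
    apply HasCompactSupport.intro' hχc.isCompact (isClosed_tsupport _)
    intro v hv
    have : χ v = 0 := image_eq_zero_of_notMem_tsupport hv
    simp [hh, this]
  refine ⟨⟨⟨h, hcont⟩, hsupp.is_zero_at_infty⟩, hsupp, ?_⟩
  intro a ha
  have hmem : s a ∈ R := Set.mem_image_of_mem s ha
  have hval : h₀ (s a) = f (r a) := by
    have h1 : g (e ⟨s a, hmem⟩) = f₁ ⟨s a, hmem⟩ := congrFun hg _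
    have h2 : (σ.symm ⟨s a, by rw [hRR]; exact hmem⟩ : K) = ⟨a, ha⟩ := by
      have : σ ⟨a, ha⟩ = ⟨s a, by rw [hRR]; exact hmem⟩ := by
        apply Subtype.ext
        rfl
      rw [← this, Homeomorph.symm_apply_apply]
    have hv : g (OnePoint.some (s a)) = f₁ ⟨s a, hmem⟩ := h1
    show g (OnePoint.some (s a)) = f (r a)
    rw [hv]
    show f (r ((σ.symm ⟨s a, by rw [hRR]; exact hmem⟩ : K) : G)) = f (r a)
    rw [h2]
  have hχv : χ (s a) = 1 := hχ1 hmem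
  show h (s a) = f (r a)
  rw [hh]
  simp [hval, hχv]

/-- The "inner product" of two elements of `C_c(E¹)`, the first supported in an
open `s`-section `U`, as a compactly supported element of `C₀(E⁰)`. -/
lemma exists_inner_pair [T2Space V] {s : G → V} (hs : IsLocalHomeomorph s)
    {U : Set G} (hU : IsOpen U) (hsec : IsSSection s U) (u w : C_c(G, ℂ))
    (hu : tsupport ⇑u ⊆ U) :
    ∃ k : C₀(V, ℂ), HasCompactSupport ⇑k ∧
      (∀ e ∈ U, k (s e) = (starRingEnd ℂ) (u e) * w e) ∧
      ∀ v, k v ≠ 0 → ∃ e ∈ U, s e = v ∧ u e ≠ 0 ∧ w e ≠ 0 := by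
  classical
  set F : U → ℂ := fun e => (starRingEnd ℂ) (u e) * w e with hF
  have hFcont : Continuous F := by
    have : Continuous fun e : U => (e : G) := continuous_subtype_val
    exact ((Complex.continuous_conj.comp ((map_continuous u).comp this)).mul
      ((map_continuous w).comp this))
  have hinj : Function.Injective (U.restrict s) := hsec.injective
  set k₀ : V → ℂ := Function.extend (U.restrict s) F 0 with hk₀
  have happly : ∀ e (he : e ∈ U), k₀ (s e) = (starRingEnd ℂ) (u e) * w e := by
    intro e he
    have : s e = U.restrict s ⟨e, he⟩ := rfl
    rw [hk₀, this, hinj.extend_apply]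
  have hnz : ∀ v, k₀ v ≠ 0 → ∃ e ∈ U, s e = v ∧ u e ≠ 0 ∧ w e ≠ 0 := by
    intro v hv
    by_cases hex : ∃ a : U, U.restrict s a = v
    · obtain ⟨a, ha⟩ := hex
      have : k₀ v = F a := by rw [hk₀, ← ha, hinj.extend_apply]
      rw [this] at hv
      have h1 : (starRingEnd ℂ) (u a) ≠ 0 := left_ne_zero_of_mul hv
      have h2 : w (a : G) ≠ 0 := right_ne_zero_of_mul hv
      exact ⟨a, a.2, ha, fun h0 => h1 (by rw [h0]; simp), h2⟩
    · exact absurd (by rw [hk₀, Function.extend_apply' _ _ _ hex]; rfl) hv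
  have hvanish : ∀ v, v ∉ s '' tsupport ⇑u → k₀ v = 0 := by
    intro v hv
    by_contra h0
    obtain ⟨e, heU, hse, hue, -⟩ := hnz v h0
    exact hv ⟨e, subset_closure hue, hse⟩
  set S : Set V := Set.range (U.restrict s) with hS
  have hSopen : IsOpen S := by
    rw [hS]
    show IsOpen (Set.range (U.domRestrict s))
    rw [Set.range_restrict]
    exact hs.isOpenMap U hU
  set σ : U ≃ₜ S := hsec.toHomeomorph with hσ
  have hrestr : S.restrict k₀ = F ∘ σ.symm := by
    funext v
    have h1 : U.restrict s (σ.symm v) = (v : V) := congrArg Subtype.val (σ.apply_symm_apply v)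
    show k₀ (v : V) = F (σ.symm v)
    rw [hk₀, ← h1, hinj.extend_apply]
  have himgcpt : IsCompact (s '' tsupport ⇑u) := u.hasCompactSupport.image hs.continuous
  have himgcl : IsClosed (s '' tsupport ⇑u) := himgcpt.isClosed
  have hsub : s '' tsupport ⇑u ⊆ S := by
    rintro - ⟨e, he, rfl⟩
    exact ⟨⟨e, hu he⟩, rfl⟩
  have hcont : Continuous k₀ := by
    rw [continuous_iff_continuousAt]
    intro v
    by_cases hv : v ∈ S
    · have : ContinuousOn k₀ S :=
        continuousOn_iff_continuous_restrict.mpr (hrestr ▸ hFcont.comp σ.symm.continuous : Continuous (S.restrict k₀))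
      exact this.continuousAt (hSopen.mem_nhds hv)
    · have hvn : v ∉ s '' tsupport ⇑u := fun h => hv (hsub h)
      have hev : k₀ =ᶠ[nhds v] fun _ => (0 : ℂ) :=
        Filter.eventually_of_mem (himgcl.isOpen_compl.mem_nhds hvn)
          fun y hy => hvanish y hy
      exact (continuousAt_const (y := (0 : ℂ))).congr hev.symm
  have hcs : HasCompactSupport k₀ := HasCompactSupport.intro' himgcpt himgcl hvanish
  exact ⟨⟨⟨k₀, hcont⟩, hcs.is_zero_at_infty⟩, hcs, happly, hnz⟩

open Complex in
lemma cpolar' (a b : ℂ) :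
    (4:ℂ)⁻¹ * (((starRingEnd ℂ) (a+b) * (a+b))
      + (-I) * ((starRingEnd ℂ) (a + I*b) * (a + I*b))
      + (-1) * ((starRingEnd ℂ) (a - b) * (a - b))
      + I * ((starRingEnd ℂ) (a - I*b) * (a - I*b)))
      = (starRingEnd ℂ) a * b := by
  simp only [map_add, map_sub, map_mul, Complex.conj_I]
  ring_nf
  simp [Complex.ext_iff]
  ring_nf
  constructor <;> trivial

open Complex in
lemma bpolar' {B : Type*} [NonUnitalCStarAlgebra B] (a b : B) :
    star a * b = (4:ℂ)⁻¹ • (star (a+b) * (a+b)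
      + (-I) • (star (a + I • b) * (a + I • b))
      + (-(1:ℂ)) • (star (a - b) * (a - b))
      + I • (star (a - I • b) * (a - I • b))) := by
  simp only [star_add, star_sub, star_smul, add_mul, sub_mul, mul_add, mul_sub,
    smul_mul_assoc, mul_smul_comm, smul_add, smul_sub, smul_smul, Complex.conj_I,
    RCLike.star_def, neg_smul, neg_neg, neg_mul]
  match_scalars <;> simp [Complex.ext_iff] <;> norm_num

lemma lprod_mul {M : Type*} [Semigroup M] (a b : M) (l : List M) :
    lprod (a * b) l = a * lprod b l := by
  induction l generalizing a b with
  | nil => rfl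
  | cons c t ih =>
    show lprod (a * b * c) t = a * lprod (b * c) t
    rw [mul_assoc]
    exact ih a (b * c)

lemma lprod_cons {M : Type*} [Semigroup M] (a b : M) (l : List M) :
    lprod a (b :: l) = a * lprod b l := lprod_mul a b l

/-- The product `ψ y * ψ ys₁ * ⋯ * ψ ysₖ`. -/
def lpsi {B : Type*} [NonUnitalCStarAlgebra B] (ψ : C_c(G, ℂ) →ₗ[ℂ] B)
    (y : C_c(G, ℂ)) (ys : List (C_c(G, ℂ))) : B :=
  lprod (ψ y) (ys.map fun z => ψ z)

lemma lpsi_nil {B : Type*} [NonUnitalCStarAlgebra B] (ψ : C_c(G, ℂ) →ₗ[ℂ] B)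
    (y : C_c(G, ℂ)) : lpsi ψ y [] = ψ y := rfl

lemma lpsi_cons {B : Type*} [NonUnitalCStarAlgebra B] (ψ : C_c(G, ℂ) →ₗ[ℂ] B)
    (y z : C_c(G, ℂ)) (ys : List (C_c(G, ℂ))) :
    lpsi ψ y (z :: ys) = ψ y * lpsi ψ z ys := by
  show lprod (ψ y) (ψ z :: ys.map fun w => ψ w) = _
  exact lprod_cons _ _ _

/-- Left module action `f · x` of `C₀(E⁰)` on `C_c(E¹)`. -/
def mulL [T2Space G] {r : G → V} (hr : Continuous r) (f : C₀(V, ℂ)) (x : C_c(G, ℂ)) :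
    C_c(G, ℂ) where
  toContinuousMap := ⟨fun e => f (r e) * x e,
    (((map_continuous f).comp hr).mul (map_continuous x))⟩
  hasCompactSupport' := by
    apply HasCompactSupport.intro x.hasCompactSupport
    intro e he
    have : x e = 0 := image_eq_zero_of_notMem_tsupport he
    simp [this]

@[simp] lemma mulL_apply [T2Space G] {r : G → V} (hr : Continuous r) (f : C₀(V, ℂ))
    (x : C_c(G, ℂ)) (e : G) : mulL hr f x e = f (r e) * x e := rfl

lemma tsupport_mulL [T2Space G] {r : G → V} (hr : Continuous r) (f : C₀(V, ℂ))
    (x : C_c(G, ℂ)) : tsupport ⇑(mulL hr f x) ⊆ tsupport ⇑x := by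
  apply closure_mono
  intro e he
  simp only [Function.mem_support] at he ⊢
  exact fun h0 => he (by simp [h0])

/-- Right module action `x · g` of `C₀(E⁰)` on `C_c(E¹)`. -/
def mulR [T2Space G] {s : G → V} (hsc : Continuous s) (x : C_c(G, ℂ)) (g : C₀(V, ℂ)) :
    C_c(G, ℂ) where
  toContinuousMap := ⟨fun e => x e * g (s e),
    ((map_continuous x).mul ((map_continuous g).comp hsc))⟩
  hasCompactSupport' := by
    apply HasCompactSupport.intro x.hasCompactSupport
    intro e he
    have : x e = 0 := image_eq_zero_of_notMem_tsupport he
    simp [this]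

@[simp] lemma mulR_apply [T2Space G] {s : G → V} (hsc : Continuous s) (x : C_c(G, ℂ))
    (g : C₀(V, ℂ)) (e : G) : mulR hsc x g e = x e * g (s e) := rfl

lemma tsupport_mulR [T2Space G] {s : G → V} (hsc : Continuous s) (x : C_c(G, ℂ))
    (g : C₀(V, ℂ)) : tsupport ⇑(mulR hsc x g) ⊆ tsupport ⇑x := by
  apply closure_mono
  intro e he
  simp only [Function.mem_support] at he ⊢
  exact fun h0 => he (by simp [h0])

/-- A nonvanishing path through the list `xs` from a vertex satisfying `Q`, ending at `v`. -/
def NZPath (r s : G → V) (P : C_c(G, ℂ) → G → Prop) (Q : V → Prop)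
    (xs : List (C_c(G, ℂ))) (v : V) : Prop :=
  ∃ (μ : List G) (hne : μ ≠ []), List.Forall₂ P xs μ ∧
    μ.Chain' (fun e f => s e = r f) ∧ Q (r (μ.head hne)) ∧ v = s (μ.getLast hne)

section Rep

variable [T2Space G] [T2Space V] {r s : G → V}
variable {B : Type*} [NonUnitalCStarAlgebra B]
variable {ψ : C_c(G, ℂ) →ₗ[ℂ] B} {π : C₀(V, ℂ) →⋆ₙₐ[ℂ] B}

lemma rep_mulL (rep : IsToeplitzRep r s ψ π) (hr : Continuous r) (f : C₀(V, ℂ))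
    (x : C_c(G, ℂ)) : ψ (mulL hr f x) = π f * ψ x :=
  rep.act f x _ fun _ => rfl

open Complex in
/-- A Toeplitz representation sends the inner product of two sections supported in a common
open `s`-section to `ψ(u)* ψ(w)`. -/
lemma exists_rep_inner (rep : IsToeplitzRep r s ψ π) (hs : IsLocalHomeomorph s)
    {U : Set G} (hU : IsOpen U) (hsec : IsSSection s U) (u w : C_c(G, ℂ))
    (hu : tsupport ⇑u ⊆ U) (hw : tsupport ⇑w ⊆ U) :
    ∃ k : C₀(V, ℂ), (∀ e ∈ U, k (s e) = (starRingEnd ℂ) (u e) * w e) ∧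
      (∀ v, k v ≠ 0 → ∃ e ∈ U, s e = v ∧ u e ≠ 0 ∧ w e ≠ 0) ∧
      star (ψ u) * ψ w = π k := by
  classical
  have diag : ∀ c : C_c(G, ℂ), tsupport ⇑c ⊆ U → ∃ k : C₀(V, ℂ),
      (∀ e ∈ U, k (s e) = (starRingEnd ℂ) (c e) * c e) ∧
      (∀ v, k v ≠ 0 → ∃ e ∈ U, s e = v ∧ c e ≠ 0) ∧ star (ψ c) * ψ c = π k := by
    intro c hc
    obtain ⟨k, _, happ, hnz⟩ := exists_inner_pair hs hU hsec c c hc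
    refine ⟨k, happ, fun v hv => ?_, ?_⟩
    · obtain ⟨e, heU, hse, he1, -⟩ := hnz v hv
      exact ⟨e, heU, hse, he1⟩
    · refine (rep.inner c U hU hsec hc k (fun e hce => ?_) (fun v hv => ?_)).symm
      · rw [happ e (hc (subset_tsupport _ hce)), ← Complex.normSq_eq_conj_mul_self,
          ← Complex.ofReal_pow, Complex.sq_norm]
      · by_contra h0
        obtain ⟨e, heU, hse, hce, -⟩ := hnz v h0
        exact hv ⟨e, hce, hse⟩
  have hts : ∀ c : C_c(G, ℂ), (∀ e, c e ≠ 0 → u e ≠ 0 ∨ w e ≠ 0) → tsupport ⇑c ⊆ U := by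
    intro c hcc
    have h1 : Function.support ⇑c ⊆ tsupport ⇑u ∪ tsupport ⇑w := by
      intro e he
      simp only [Function.mem_support] at he
      rcases hcc e he with h | h
      · exact Or.inl (subset_tsupport _ h)
      · exact Or.inr (subset_tsupport _ h)
    exact (closure_minimal h1 ((isClosed_tsupport _).union (isClosed_tsupport _))).trans
      (Set.union_subset hu hw)
  have hcc : ∀ (a : ℂ) (e : G), u e + a * w e ≠ 0 → u e ≠ 0 ∨ w e ≠ 0 := by
    intro a e he
    by_contra hc
    push_neg at hc
    exact he (by simp [hc.1, hc.2])
  obtain ⟨k0, ha0, hn0, hi0⟩ := diag (u + w) (hts _ fun e he => hcc 1 e (by simpa using he))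
  obtain ⟨k1, ha1, hn1, hi1⟩ := diag (u + I • w) (hts _ fun e he => hcc I e (by simpa using he))
  obtain ⟨k2, ha2, hn2, hi2⟩ := diag (u - w)
    (hts _ fun e he => hcc (-1) e (by simpa [sub_eq_add_neg, neg_mul] using he))
  obtain ⟨k3, ha3, hn3, hi3⟩ := diag (u - I • w)
    (hts _ fun e he => hcc (-I) e (by simpa [sub_eq_add_neg, neg_mul] using he))
  set k : C₀(V, ℂ) := (4:ℂ)⁻¹ • (k0 + (-I) • k1 + (-(1:ℂ)) • k2 + I • k3) with hk
  have hkval : ∀ v, k v = (4:ℂ)⁻¹ * (k0 v + (-I) * k1 v + (-1) * k2 v + I * k3 v) := by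
    intro v
    simp [hk, smul_eq_mul]
    try ring
  have happ : ∀ e ∈ U, k (s e) = (starRingEnd ℂ) (u e) * w e := by
    intro e he
    have e0 := ha0 e he
    have e1 := ha1 e he
    have e2 := ha2 e he
    have e3 := ha3 e he
    have v0 : (u + w) e = u e + w e := by simp
    have v1 : (u + I • w) e = u e + I * w e := by simp
    have v2 : (u - w) e = u e - w e := by simp
    have v3 : (u - I • w) e = u e - I * w e := by simp
    rw [hkval, e0, e1, e2, e3, v0, v1, v2, v3]
    exact cpolar' (u e) (w e)
  have hnz : ∀ v, k v ≠ 0 → ∃ e ∈ U, s e = v ∧ u e ≠ 0 ∧ w e ≠ 0 := by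
    intro v hv
    have hone : k0 v ≠ 0 ∨ k1 v ≠ 0 ∨ k2 v ≠ 0 ∨ k3 v ≠ 0 := by
      by_contra hcon
      push_neg at hcon
      obtain ⟨h0, h1, h2, h3⟩ := hcon
      exact hv (by rw [hkval, h0, h1, h2, h3]; ring)
    have hex : ∃ e ∈ U, s e = v := by
      rcases hone with h | h | h | h
      · obtain ⟨e, heU, hse, -⟩ := hn0 v h; exact ⟨e, heU, hse⟩
      · obtain ⟨e, heU, hse, -⟩ := hn1 v h; exact ⟨e, heU, hse⟩
      · obtain ⟨e, heU, hse, -⟩ := hn2 v h; exact ⟨e, heU, hse⟩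
      · obtain ⟨e, heU, hse, -⟩ := hn3 v h; exact ⟨e, heU, hse⟩
    obtain ⟨e, heU, rfl⟩ := hex
    rw [happ e heU] at hv
    refine ⟨e, heU, rfl, fun h0 => hv (by simp [h0]), fun h0 => hv (by simp [h0])⟩
  have hid : star (ψ u) * ψ w = π k := by
    have m0 : ψ (u + w) = ψ u + ψ w := by rw [map_add]
    have m1 : ψ (u + I • w) = ψ u + I • ψ w := by rw [map_add, map_smul]
    have m2 : ψ (u - w) = ψ u - ψ w := by rw [map_sub]
    have m3 : ψ (u - I • w) = ψ u - I • ψ w := by rw [map_sub, map_smul]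
    rw [bpolar' (ψ u) (ψ w), ← m0, ← m1, ← m2, ← m3, hi0, hi1, hi2, hi3, hk,
      map_smul, map_add, map_add, map_add, map_smul, map_smul, map_smul]
  exact ⟨k, happ, hnz, hid⟩

lemma rep_right_mul (rep : IsToeplitzRep r s ψ π) (hs : IsLocalHomeomorph s)
    {U : Set G} (hU : IsOpen U) (hsec : IsSSection s U) (x : C_c(G, ℂ))
    (hx : tsupport ⇑x ⊆ U) (g : C₀(V, ℂ)) :
    ψ x * π g = ψ (mulR hs.continuous x g) := by
  set y : C_c(G, ℂ) := mulR hs.continuous x g with hy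
  have hyU : tsupport ⇑y ⊆ U := (tsupport_mulR _ _ _).trans hx
  obtain ⟨kxx, haxx, hnxx, hixx⟩ := exists_rep_inner rep hs hU hsec x x hx hx
  obtain ⟨kxy, haxy, hnxy, hixy⟩ := exists_rep_inner rep hs hU hsec x y hx hyU
  obtain ⟨kyx, hayx, hnyx, hiyx⟩ := exists_rep_inner rep hs hU hsec y x hyU hx
  obtain ⟨kyy, hayy, hnyy, hiyy⟩ := exists_rep_inner rep hs hU hsec y y hyU hyU
  have expand : star (ψ x * π g - ψ y) * (ψ x * π g - ψ y)
      = π (star g * kxx * g - star g * kxy - kyx * g + kyy) := by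
    have h1 : star (ψ x * π g - ψ y) * (ψ x * π g - ψ y)
        = star (π g) * (star (ψ x) * ψ x) * π g - star (π g) * (star (ψ x) * ψ y)
          - (star (ψ y) * ψ x) * π g + star (ψ y) * ψ y := by
      simp only [star_sub, star_mul, sub_mul, mul_sub]
      noncomm_ring
    rw [h1, hixx, hixy, hiyx, hiyy, ← map_star, ← map_mul, ← map_mul, ← map_mul,
      ← map_mul, ← map_sub, ← map_sub, ← map_add]
  have hzero : star g * kxx * g - star g * kxy - kyx * g + kyy = 0 := by
    ext v
    by_cases hv : ∃ e ∈ U, s e = v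
    · obtain ⟨e, heU, rfl⟩ := hv
      have exx := haxx e heU
      have exy := haxy e heU
      have eyx := hayx e heU
      have eyy := hayy e heU
      have hye : y e = x e * g (s e) := rfl
      simp only [ZeroAtInftyContinuousMap.coe_add, ZeroAtInftyContinuousMap.coe_sub,
        ZeroAtInftyContinuousMap.coe_mul, ZeroAtInftyContinuousMap.coe_star,
        ZeroAtInftyContinuousMap.coe_zero, Pi.add_apply, Pi.sub_apply, Pi.mul_apply,
        Pi.star_apply, Pi.zero_apply, RCLike.star_def]
      rw [exx, exy, eyx, eyy, hye, map_mul]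
      ring
    · push_neg at hv
      have z0 : kxx v = 0 := by
        by_contra h
        obtain ⟨e, heU, hse, -⟩ := hnxx v h
        exact hv e heU hse
      have z1 : kxy v = 0 := by
        by_contra h
        obtain ⟨e, heU, hse, -⟩ := hnxy v h
        exact hv e heU hse
      have z2 : kyx v = 0 := by
        by_contra h
        obtain ⟨e, heU, hse, -⟩ := hnyx v h
        exact hv e heU hse
      have z3 : kyy v = 0 := by
        by_contra h
        obtain ⟨e, heU, hse, -⟩ := hnyy v h
        exact hv e heU hse
      simp only [ZeroAtInftyContinuousMap.coe_add, ZeroAtInftyContinuousMap.coe_sub,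
        ZeroAtInftyContinuousMap.coe_mul, ZeroAtInftyContinuousMap.coe_star,
        ZeroAtInftyContinuousMap.coe_zero, Pi.add_apply, Pi.sub_apply, Pi.mul_apply,
        Pi.star_apply, Pi.zero_apply]
      rw [z0, z1, z2, z3]
      ring
  have := expand
  rw [hzero, map_zero] at this
  have h0 : ψ x * π g - ψ y = 0 := (CStarRing.star_mul_self_eq_zero_iff _).mp this
  exact sub_eq_zero.mp h0

lemma key_edge (rep : IsToeplitzRep r s ψ π) (hr : Continuous r) (hs : IsLocalHomeomorph s)
    (x : C_c(G, ℂ)) (hx : IsSSection s (tsupport ⇑x)) (f g : C₀(V, ℂ))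
    (hfg : ∀ e, x e ≠ 0 → g (s e) = f (r e)) :
    π f * ψ x = ψ x * π g := by
  obtain ⟨U, hU, hxU, hsec⟩ := exists_open_ssection hs x.hasCompactSupport hx
  rw [rep_right_mul rep hs hU hsec x hxU g, ← rep_mulL rep hr f x]
  congr 1
  apply CompactlySupportedContinuousMap.ext
  intro e
  by_cases hxe : x e = 0
  · simp [hxe]
  · simp [hfg e hxe, mul_comm]

lemma single_sandwich (rep : IsToeplitzRep r s ψ π) (hr : Continuous r)
    (hs : IsLocalHomeomorph s) (y : C_c(G, ℂ)) (hy : IsSSection s (tsupport ⇑y))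
    (k : C₀(V, ℂ)) :
    ∃ k₁ : C₀(V, ℂ), star (ψ y) * π k * ψ y = π k₁ ∧
      ∀ w, k₁ w ≠ 0 → ∃ e, y e ≠ 0 ∧ k (r e) ≠ 0 ∧ w = s e := by
  obtain ⟨U, hU, hyU, hsec⟩ := exists_open_ssection hs y.hasCompactSupport hy
  obtain ⟨k₁, happ, hnz, hid⟩ := exists_rep_inner rep hs hU hsec y (mulL hr k y) hyU
    ((tsupport_mulL hr k y).trans hyU)
  refine ⟨k₁, ?_, ?_⟩
  · rw [mul_assoc, ← rep_mulL rep hr k y]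
    exact hid
  · intro w hw
    obtain ⟨e, heU, hse, hye, hme⟩ := hnz w hw
    refine ⟨e, hye, ?_, hse.symm⟩
    intro h0
    apply hme
    simp [h0]

lemma sandwich (rep : IsToeplitzRep r s ψ π) (hr : Continuous r) (hs : IsLocalHomeomorph s) :
    ∀ (ys : List (C_c(G, ℂ))) (y : C_c(G, ℂ)),
      IsSSection s (tsupport ⇑y) → (∀ z ∈ ys, IsSSection s (tsupport ⇑z)) →
      ∀ k : C₀(V, ℂ), ∃ k' : C₀(V, ℂ),
        star (lpsi ψ y ys) * π k * lpsi ψ y ys = π k' ∧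
        ∀ v, k' v ≠ 0 → NZPath r s (fun z e => z e ≠ 0) (fun w => k w ≠ 0) (y :: ys) v := by
  intro ys
  induction ys with
  | nil =>
    intro y hy _ k
    obtain ⟨k₁, hid, hprop⟩ := single_sandwich rep hr hs y hy k
    refine ⟨k₁, hid, ?_⟩
    intro v hv
    obtain ⟨e, hye, hke, rfl⟩ := hprop v hv
    exact ⟨[e], by simp, List.Forall₂.cons hye List.Forall₂.nil,
      List.isChain_singleton e, hke, rfl⟩
  | cons z zs ih =>
    intro y hy hzs k
    obtain ⟨k₁, hid1, hprop1⟩ := single_sandwich rep hr hs y hy k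
    obtain ⟨k', hid', hprop'⟩ := ih z (hzs z (by simp))
      (fun w hw => hzs w (by simp [hw])) k₁
    refine ⟨k', ?_, ?_⟩
    · rw [lpsi_cons, star_mul]
      calc star (lpsi ψ z zs) * star (ψ y) * π k * (ψ y * lpsi ψ z zs)
          = star (lpsi ψ z zs) * (star (ψ y) * π k * ψ y) * lpsi ψ z zs := by
            simp only [mul_assoc]
        _ = star (lpsi ψ z zs) * π k₁ * lpsi ψ z zs := by rw [hid1]
        _ = π k' := hid'
    · intro v hv
      obtain ⟨μ, hne, hF, hC, hQ, hlast⟩ := hprop' v hv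
      obtain ⟨m, ms, rfl⟩ := List.exists_cons_of_ne_nil hne
      obtain ⟨e, hye, hke, hre⟩ := hprop1 _ hQ
      refine ⟨e :: m :: ms, by simp, List.Forall₂.cons hye hF,
        List.isChain_cons_cons.mpr ⟨hre.symm, hC⟩, hke, ?_⟩
      simpa [List.getLast_cons] using hlast

lemma kill (rep : IsToeplitzRep r s ψ π) (hr : Continuous r) (hs : IsLocalHomeomorph s)
    (ys : List (C_c(G, ℂ))) (y : C_c(G, ℂ))
    (hy : IsSSection s (tsupport ⇑y)) (hys : ∀ z ∈ ys, IsSSection s (tsupport ⇑z))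
    (g : C₀(V, ℂ))
    (hg : ∀ v, NZPath r s (fun z e => z e ≠ 0) (fun _ => True) (y :: ys) v → g v = 0) :
    lpsi ψ y ys * π g = 0 := by
  have main : ∃ k' : C₀(V, ℂ), star (lpsi ψ y ys) * lpsi ψ y ys = π k' ∧
      ∀ v, k' v ≠ 0 → NZPath r s (fun z e => z e ≠ 0) (fun _ => True) (y :: ys) v := by
    obtain ⟨U, hU, hyU, hsec⟩ := exists_open_ssection hs y.hasCompactSupport hy
    obtain ⟨kyy, happ, hnz, hid⟩ := exists_rep_inner rep hs hU hsec y y hyU hyU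
    cases ys with
    | nil =>
      refine ⟨kyy, hid, ?_⟩
      intro v hv
      obtain ⟨e, heU, hse, hye, -⟩ := hnz v hv
      exact ⟨[e], by simp, List.Forall₂.cons hye List.Forall₂.nil,
        List.isChain_singleton e, trivial, hse.symm⟩
    | cons z zs =>
      obtain ⟨k', hid', hprop'⟩ := sandwich rep hr hs zs z (hys z (by simp))
        (fun w hw => hys w (by simp [hw])) kyy
      refine ⟨k', ?_, ?_⟩
      · rw [lpsi_cons, star_mul]
        calc star (lpsi ψ z zs) * star (ψ y) * (ψ y * lpsi ψ z zs)
            = star (lpsi ψ z zs) * (star (ψ y) * ψ y) * lpsi ψ z zs := by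
              simp only [mul_assoc]
          _ = star (lpsi ψ z zs) * π kyy * lpsi ψ z zs := by rw [hid]
          _ = π k' := hid'
      · intro v hv
        obtain ⟨μ, hne, hF, hC, hQ, hlast⟩ := hprop' v hv
        obtain ⟨m, ms, rfl⟩ := List.exists_cons_of_ne_nil hne
        obtain ⟨e, heU, hse, hye, -⟩ := hnz _ hQ
        refine ⟨e :: m :: ms, by simp, List.Forall₂.cons hye hF,
          List.isChain_cons_cons.mpr ⟨hse, hC⟩, trivial, ?_⟩
        simpa [List.getLast_cons] using hlast
  obtain ⟨k', hk', hp⟩ := main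
  have h2 : star (lpsi ψ y ys * π g) * (lpsi ψ y ys * π g) = π (star g * k' * g) := by
    rw [star_mul]
    calc star (π g) * star (lpsi ψ y ys) * (lpsi ψ y ys * π g)
        = star (π g) * (star (lpsi ψ y ys) * lpsi ψ y ys) * π g := by
          simp only [mul_assoc]
      _ = star (π g) * π k' * π g := by rw [hk']
      _ = π (star g * k' * g) := by rw [← map_star, ← map_mul, ← map_mul]
  have h3 : star g * k' * g = 0 := by
    ext v
    by_cases hv : k' v = 0
    · simp [hv]
    · have hgv := hg v (hp v hv)
      simp [hgv]
  rw [h3, map_zero] at h2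
  exact (CStarRing.star_mul_self_eq_zero_iff _).mp h2

end Rep

lemma chain_lemma.{u'} [LocallyCompactSpace V] [T2Space V] [T2Space G]
    {r s : G → V} (hr : Continuous r) (hs : IsLocalHomeomorph s) :
    ∀ (ys : List (C_c(G, ℂ))) (y : C_c(G, ℂ)),
      IsSSection s (tsupport ⇑y) → (∀ z ∈ ys, IsSSection s (tsupport ⇑z)) →
      ∀ f : C₀(V, ℂ), ∃ F : C₀(V, ℂ), HasCompactSupport ⇑F ∧
        (∀ (μ : List G) (hne : μ ≠ []),
          List.Forall₂ (fun (z : C_c(G, ℂ)) e => e ∈ tsupport ⇑z) (y :: ys) μ →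
          μ.Chain' (fun e f' => s e = r f') →
          F (s (μ.getLast hne)) = f (r (μ.head hne))) ∧
        ∀ (B : Type u') (instB : NonUnitalCStarAlgebra B) (ψ : C_c(G, ℂ) →ₗ[ℂ] B)
          (π : C₀(V, ℂ) →⋆ₙₐ[ℂ] B), IsToeplitzRep r s ψ π →
          π f * lpsi ψ y ys = lpsi ψ y ys * π F := by
  intro ys
  induction ys with
  | nil =>
    intro y hy _ f
    obtain ⟨h, hcs, hval⟩ := tietze_step hr hs.continuous y.hasCompactSupport hy f
    refine ⟨h, hcs, ?_, ?_⟩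
    · intro μ hne hF hC
      cases hF with
      | cons he hnil =>
        cases hnil
        exact hval _ he
    · intro B instB ψ π rep
      exact key_edge rep hr hs y hy f h fun e h0 => hval e (subset_tsupport _ h0)
  | cons z zs ih =>
    intro y hy hzs f
    obtain ⟨h, hcs, hval⟩ := tietze_step hr hs.continuous y.hasCompactSupport hy f
    obtain ⟨F, hFcs, hFpath, hFrep⟩ := ih z (hzs z (by simp))
      (fun w hw => hzs w (by simp [hw])) h
    refine ⟨F, hFcs, ?_, ?_⟩
    · intro μ hne hF hC
      cases hF with
      | cons he hF' =>
        rename_i e μ'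
        have hne' : μ' ≠ [] := by
          intro h0
          subst h0
          cases hF'
        obtain ⟨m, ms, rfl⟩ := List.exists_cons_of_ne_nil hne'
        have hchain := List.isChain_cons_cons.mp hC
        have hrec := hFpath (m :: ms) hne' hF' hchain.2
        calc F (s ((e :: m :: ms).getLast hne)) = F (s ((m :: ms).getLast hne')) := by
              rw [List.getLast_cons]
          _ = h (r m) := hrec
          _ = h (s e) := by rw [hchain.1]
          _ = f (r e) := hval e he
    · intro B instB ψ π rep
      have h1 : π f * ψ y = ψ y * π h :=
        key_edge rep hr hs y hy f h fun e h0 => hval e (subset_tsupport _ h0)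
      have h2 := hFrep B instB ψ π rep
      rw [lpsi_cons]
      calc π f * (ψ y * lpsi ψ z zs) = (π f * ψ y) * lpsi ψ z zs := by rw [mul_assoc]
        _ = (ψ y * π h) * lpsi ψ z zs := by rw [h1]
        _ = ψ y * (π h * lpsi ψ z zs) := by rw [mul_assoc]
        _ = ψ y * (lpsi ψ z zs * π F) := by rw [h2]
        _ = (ψ y * lpsi ψ z zs) * π F := by rw [mul_assoc]

end Statement15Aux

/-- For `x₁, …, xₙ ∈ C_c(E¹)` supported on `s`-sections, `x = x₁◇⋯◇xₙ` and
`f ∈ C₀(E⁰)`, there exists `f̃ ∈ C_c(E⁰)` with `f̃(s μ) = f(r μ)` whenever `x(μ) ≠ 0`; for any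
such `f̃` one has `f·x = x·f̃` and `π(f) ψ(x₁)⋯ψ(xₙ) = ψ(x₁)⋯ψ(xₙ) π(f̃)` for every Toeplitz
representation `(ψ, π)` of `E`. -/
theorem statement15.{u} {V G : Type*} [TopologicalSpace V] [TopologicalSpace G]
    [LocallyCompactSpace V] [T2Space V] [LocallyCompactSpace G] [T2Space G]
    (r s : G → V) (hr : Continuous r) (hs : IsLocalHomeomorph s)
    (n : ℕ) (hn : 0 < n) (x : Fin n → C_c(G, ℂ))
    (hx : ∀ i, IsSSection s (tsupport ⇑(x i))) (f : C₀(V, ℂ)) :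
    (∃ ft : C₀(V, ℂ), HasCompactSupport ⇑ft ∧
      ∀ μ ∈ PathSet r s n, diam x μ ≠ 0 →
        ft (s (μ ⟨n - 1, by omega⟩)) = f (r (μ ⟨0, hn⟩))) ∧
    ∀ ft : C₀(V, ℂ), HasCompactSupport ⇑ft →
      (∀ μ ∈ PathSet r s n, diam x μ ≠ 0 →
        ft (s (μ ⟨n - 1, by omega⟩)) = f (r (μ ⟨0, hn⟩))) →
      (∀ μ ∈ PathSet r s n,
        f (r (μ ⟨0, hn⟩)) * diam x μ = diam x μ * ft (s (μ ⟨n - 1, by omega⟩))) ∧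
      ∀ (B : Type u) (_ : NonUnitalCStarAlgebra B)
        (ψ : C_c(G, ℂ) →ₗ[ℂ] B) (π : C₀(V, ℂ) →⋆ₙₐ[ℂ] B),
        IsToeplitzRep r s ψ π →
        π f * (finProd hn fun i => ψ (x i)) = (finProd hn fun i => ψ (x i)) * π ft := by
  classical
  obtain ⟨m, rfl⟩ : ∃ m, n = m + 1 := ⟨n - 1, by omega⟩
  set y : C_c(G, ℂ) := x ⟨0, hn⟩ with hy
  set ys : List (C_c(G, ℂ)) :=
    List.ofFn (fun i : Fin m => x ⟨(i : ℕ) + 1, by omega⟩) with hys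
  have hcons : y :: ys = List.ofFn x := by
    rw [hy, hys, List.ofFn_succ]
    congr 1
    all_goals first
      | rfl
      | exact congrArg x (Fin.ext (by simp))
  have hsecys : ∀ z ∈ ys, IsSSection s (tsupport ⇑z) := by
    intro z hz
    rw [hys, List.mem_ofFn] at hz
    obtain ⟨i, rfl⟩ := hz
    exact hx _
  obtain ⟨F, hFcs, hFpath, hFrep⟩ := chain_lemma hr hs ys y (hx _) hsecys f
  have finpath : ∀ μ, μ ∈ PathSet r s (m + 1) → ∀ (P : C_c(G, ℂ) → G → Prop),
      (∀ i : Fin (m + 1), P (x i) (μ i)) →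
      List.Forall₂ P (y :: ys) (List.ofFn μ) ∧
        (List.ofFn μ).Chain' (fun e f' => s e = r f') ∧
        (List.ofFn μ) ≠ [] := by
    intro μ hμ P hP
    have hne : List.ofFn μ ≠ [] := List.ne_nil_of_length_pos (by simp)
    refine ⟨?_, ?_, hne⟩
    · rw [hcons, List.forall₂_iff_get]
      refine ⟨by simp, ?_⟩
      intro i h1 h2
      simp only [List.get_ofFn]
      exact hP _
    · refine List.isChain_iff_getElem.mpr ?_
      intro i hi
      simp only [List.getElem_ofFn]
      have hi' : i + 1 < m + 1 := by
        simp only [List.length_ofFn] at hi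
        omega
      exact hμ i hi'
  have hheadlast : ∀ (μ : Fin (m + 1) → G) (hne : (List.ofFn μ) ≠ []),
      (List.ofFn μ).head hne = μ ⟨0, hn⟩ ∧
      (List.ofFn μ).getLast hne = μ ⟨m, by omega⟩ := by
    intro μ hne
    constructor
    · rw [List.head_eq_getElem_zero]
      simp only [List.getElem_ofFn]
      try (congr 1; exact Fin.ext (by simp))
    · rw [List.getLast_eq_getElem]
      simp only [List.getElem_ofFn]
      try (congr 1; exact Fin.ext (by simp))
  have hFfin : ∀ μ ∈ PathSet r s (m + 1), diam x μ ≠ 0 →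
      F (s (μ ⟨m + 1 - 1, by omega⟩)) = f (r (μ ⟨0, hn⟩)) := by
    intro μ hμ hd
    have hall : ∀ i, x i (μ i) ≠ 0 := by
      intro i
      exact Finset.prod_ne_zero_iff.mp hd i (Finset.mem_univ i)
    obtain ⟨hF2, hCh, hne⟩ := finpath μ hμ (fun z e => e ∈ tsupport ⇑z)
      (fun i => subset_tsupport _ (hall i))
    obtain ⟨hhead, hlast⟩ := hheadlast μ hne
    have := hFpath (List.ofFn μ) hne hF2 hCh
    rw [hhead, hlast] at this
    exact this
  refine ⟨⟨F, hFcs, hFfin⟩, ?_⟩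
  intro ft hftcs hft
  constructor
  · intro μ hμ
    by_cases hd : diam x μ = 0
    · rw [hd]
      simp
    · rw [hft μ hμ hd]
      exact mul_comm _ _
  · intro B instB ψ π rep
    have hfe : finProd hn (fun i => ψ (x i)) = lpsi ψ y ys := by
      show lprod _ _ = lprod _ _
      rw [hys, List.map_ofFn]
      rfl
    rw [hfe]
    have h1 : π f * lpsi ψ y ys = lpsi ψ y ys * π F := hFrep B instB ψ π rep
    have hkill : lpsi ψ y ys * π (F - ft) = 0 := by
      apply kill rep hr hs ys y (hx _) hsecys
      intro v hv
      obtain ⟨μL, hne, hF2, hCh, -, hlastv⟩ := hv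
      have hF2' := hF2
      rw [hcons] at hF2'
      have hlen : μL.length = m + 1 := by
        have := hF2'.length_eq
        simpa using this.symm
      set ν : Fin (m + 1) → G := fun i => μL.get (Fin.cast hlen.symm i) with hν
      have hofn : List.ofFn ν = μL := by
        apply List.ext_get (by simp [hlen])
        intro i h1 h2
        rw [List.get_ofFn]
        rfl
      have hPS : ν ∈ PathSet r s (m + 1) := by
        intro i hi
        have hc := List.isChain_iff_getElem.mp hCh i (by omega)
        exact hc
      have hdz : diam x ν ≠ 0 := by
        apply Finset.prod_ne_zero_iff.mpr
        intro i _
        have h2 := (List.forall₂_iff_get.mp hF2').2 i (by simp; omega) (by omega)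
        simp only [List.get_ofFn] at h2
        exact h2
      have hlastL : μL.getLast hne = ν ⟨m, by omega⟩ := by
        show μL.getLast hne = μL.get (Fin.cast hlen.symm ⟨m, by omega⟩)
        rw [List.getLast_eq_getElem, List.get_eq_getElem]
        congr 1
        simp [hlen]
      have hheadL : μL.head hne = ν ⟨0, hn⟩ := by
        show μL.head hne = μL.get (Fin.cast hlen.symm ⟨0, hn⟩)
        rw [List.head_eq_getElem_zero, List.get_eq_getElem]
        rfl
      have e1 : F v = f (r (ν ⟨0, hn⟩)) := by
        have hF2t : List.Forall₂ (fun (z : C_c(G, ℂ)) e => e ∈ tsupport ⇑z) (y :: ys) μL :=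
          hF2.imp fun a b hab => subset_tsupport _ hab
        have hval := hFpath μL hne hF2t hCh
        rw [hlastv, hval, hheadL]
      have e2 : ft v = f (r (ν ⟨0, hn⟩)) := by
        have := hft ν hPS hdz
        rw [hlastv, hlastL]
        exact this
      show (F - ft) v = 0
      simp [e1, e2]
    have h2 : lpsi ψ y ys * π F = lpsi ψ y ys * π ft := by
      rw [map_sub, mul_sub, sub_eq_zero] at hkill
      exact hkill
    rw [h1, h2]

end TopGraphPaper
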